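/- arXiv:2111.13857 — 3 statements merged into one kernel-verified Lean document; each statement's English description precedes it below -/
import Mathlib

section
/- The number of lattice paths from (0,0) to (M,N) with steps (+1,+1) and (-1,+1) that never visit a point with x-coordinate strictly less than a, where a ≤ 0 and M ≥ a, equals C(N,(N-M)/2) − C(N,(N-M)/2 + a − 1). -/
/-- Binomial coefficient with integer arguments, zero outside `0 ≤ k ≤ n`. -/
def chooseZ (n k : ℤ) : ℤ := if 0 ≤ k ∧ k ≤ n then (Nat.choose n.toNat k.toNat : ℤ) else 0

/-- Position after the first `m` steps of a path encoded by `f : Fin N → Bool`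
(`true` = step (+1,+1), `false` = step (−1,+1)). -/
def pathPos {N : ℕ} (f : Fin N → Bool) (m : ℕ) : ℤ :=
  ∑ i : Fin N, if (i : ℕ) < m then (if f i then (1 : ℤ) else -1) else 0

lemma chooseZ_eq_zero {n k : ℤ} (h : k < 0 ∨ n < k) : chooseZ n k = 0 := by
  unfold chooseZ; rw [if_neg]; omega

lemma chooseZ_natCast (n k : ℕ) : chooseZ n k = Nat.choose n k := by
  unfold chooseZ
  split
  · simp
  · next h =>
    have hn : n < k := by omega
    simp [Nat.choose_eq_zero_of_lt hn]

lemma chooseZ_pascal (n : ℕ) (k : ℤ) :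
    chooseZ ((n : ℤ) + 1) k = chooseZ (n : ℤ) k + chooseZ (n : ℤ) (k - 1) := by
  rcases lt_or_ge k 0 with hk | hk
  · rw [chooseZ_eq_zero (Or.inl hk), chooseZ_eq_zero (Or.inl hk),
      chooseZ_eq_zero (Or.inl (by omega))]; ring
  · obtain ⟨m, rfl⟩ := Int.eq_ofNat_of_zero_le hk
    have h1 : ((n : ℤ) + 1) = ((n + 1 : ℕ) : ℤ) := by push_cast; ring
    rw [h1]
    rcases Nat.eq_zero_or_pos m with rfl | hm
    · rw [chooseZ_natCast, chooseZ_natCast, chooseZ_eq_zero (Or.inl (by norm_num))]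
      simp
    · obtain ⟨j, rfl⟩ := Nat.exists_eq_add_of_lt hm
      have h2 : ((0 + j + 1 : ℕ) : ℤ) - 1 = ((j : ℕ) : ℤ) := by push_cast; ring
      rw [h2, chooseZ_natCast, chooseZ_natCast, chooseZ_natCast]
      have h3 := Nat.choose_succ_succ n j
      simp only [Nat.zero_add, Nat.succ_eq_add_one] at *
      push_cast
      omega

lemma chooseZ_symm (n : ℕ) (k : ℤ) : chooseZ (n : ℤ) k = chooseZ (n : ℤ) ((n : ℤ) - k) := by
  rcases lt_or_ge k 0 with hk | hk
  · rw [chooseZ_eq_zero (Or.inl hk), chooseZ_eq_zero (Or.inr (by omega))]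
  rcases le_or_gt k n with hk2 | hk2
  · obtain ⟨m, rfl⟩ := Int.eq_ofNat_of_zero_le hk
    have hm : m ≤ n := by exact_mod_cast hk2
    have h2 : (n : ℤ) - (m : ℤ) = ((n - m : ℕ) : ℤ) := by omega
    rw [h2, chooseZ_natCast, chooseZ_natCast, Nat.choose_symm hm]
  · rw [chooseZ_eq_zero (Or.inr hk2), chooseZ_eq_zero (Or.inl (by omega))]

lemma pathPos_init {N : ℕ} (f : Fin (N + 1) → Bool) {k : ℕ} (hk : k ≤ N) :
    pathPos (Fin.init f) k = pathPos f k := by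
  unfold pathPos
  rw [Fin.sum_univ_castSucc]
  have : ¬ ((Fin.last N : ℕ) < k) := by simp [Fin.last]; omega
  rw [if_neg this, add_zero]
  apply Finset.sum_congr rfl
  intro i _
  simp [Fin.init]
  rfl

lemma pathPos_last {N : ℕ} (f : Fin (N + 1) → Bool) :
    pathPos f (N + 1) = pathPos (Fin.init f) N + (if f (Fin.last N) then 1 else -1) := by
  unfold pathPos
  rw [Fin.sum_univ_castSucc]
  have : ((Fin.last N : ℕ) < N + 1) := by simp [Fin.last]
  rw [if_pos this]
  congr 1
  apply Finset.sum_congr rfl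
  intro i _
  have h2 : ((i : ℕ)) < N := i.isLt
  simp only [Fin.init, Fin.coe_castSucc]
  rw [if_pos (by omega : (i : ℕ) < N + 1), if_pos h2]
  rfl

lemma card_snoc (N : ℕ) (M a : ℤ) (hM : a ≤ M) (b : Bool) :
    (Finset.univ.filter (fun f : Fin (N + 1) → Bool =>
      (pathPos f (N + 1) = M ∧ ∀ k ≤ N + 1, a ≤ pathPos f k) ∧ f (Fin.last N) = b)).card
    = (Finset.univ.filter (fun g : Fin N → Bool =>
      pathPos g N = M - (if b then 1 else -1) ∧ ∀ k ≤ N, a ≤ pathPos g k)).card := by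
  refine Finset.card_bij' (fun f _ => Fin.init f) (fun g _ => Fin.snoc g b) ?_ ?_ ?_ ?_
  · intro f hf
    simp only [Finset.mem_filter, Finset.mem_univ, true_and] at hf ⊢
    obtain ⟨⟨h1, h2⟩, h3⟩ := hf
    have hl := pathPos_last f
    rw [h1, h3] at hl
    constructor
    · linarith [hl]
    · intro k hk
      rw [pathPos_init f hk]
      exact h2 k (by omega)
  · intro g hg
    simp only [Finset.mem_filter, Finset.mem_univ, true_and] at hg ⊢
    obtain ⟨h1, h2⟩ := hg
    have hinit : Fin.init (Fin.snoc g b : Fin (N+1) → Bool) = g := by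
      funext i; simp [Fin.init]
    have hlast : (Fin.snoc g b : Fin (N+1) → Bool) (Fin.last N) = b := by simp
    have hl := pathPos_last (Fin.snoc g b)
    rw [hinit, hlast, h1] at hl
    refine ⟨⟨by linarith [hl], ?_⟩, hlast⟩
    intro k hk
    rcases Nat.lt_or_ge k (N + 1) with hk2 | hk2
    · rw [← pathPos_init (Fin.snoc g b) (by omega : k ≤ N), hinit]
      exact h2 k (by omega)
    · have : k = N + 1 := by omega
      rw [this, hl]
      linarith
  · intro f hf
    simp only [Finset.mem_filter, Finset.mem_univ, true_and] at hf
    have h := Fin.snoc_init_self f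
    rw [hf.2] at h
    exact h
  · intro g hg
    funext i; simp [Fin.init]

lemma card_step (N : ℕ) (M a : ℤ) (hM : a ≤ M) :
    ((Finset.univ.filter (fun f : Fin (N + 1) → Bool =>
        pathPos f (N + 1) = M ∧ ∀ k ≤ N + 1, a ≤ pathPos f k)).card : ℤ)
    = ((Finset.univ.filter (fun g : Fin N → Bool =>
        pathPos g N = M - 1 ∧ ∀ k ≤ N, a ≤ pathPos g k)).card : ℤ)
    + ((Finset.univ.filter (fun g : Fin N → Bool =>
        pathPos g N = M + 1 ∧ ∀ k ≤ N, a ≤ pathPos g k)).card : ℤ) := by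
  have hsplit := Finset.card_filter_add_card_filter_not
    (s := Finset.univ.filter (fun f : Fin (N + 1) → Bool =>
      pathPos f (N + 1) = M ∧ ∀ k ≤ N + 1, a ≤ pathPos f k))
    (p := fun f => f (Fin.last N) = true)
  rw [Finset.filter_filter, Finset.filter_filter] at hsplit
  simp only [Bool.not_eq_true] at hsplit
  have ht := card_snoc N M a hM true
  have hf2 := card_snoc N M a hM false
  simp only [if_pos, if_neg, Bool.not_eq_true] at ht hf2
  norm_num at ht hf2 ⊢
  rw [← hsplit, ht, hf2]
  push_cast
  ring

/-- The number of lattice paths from (0,0) to (M,N) with steps (+1,+1), (−1,+1)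
never visiting a point with x-coordinate < a (left wall at `x = a ≤ 0`) equals
`C(N,(N−M)/2) − C(N,(N−M)/2 + a − 1)`. -/
theorem stmt1 (N : ℕ) (M a : ℤ) (ha : a ≤ 0) (hM : a ≤ M) (hpar : 2 ∣ ((N : ℤ) - M)) :
    ((Finset.univ.filter (fun f : Fin N → Bool =>
        pathPos f N = M ∧ ∀ k ≤ N, a ≤ pathPos f k)).card : ℤ)
      = chooseZ N (((N : ℤ) - M) / 2) - chooseZ N (((N : ℤ) - M) / 2 + a - 1) := by
  induction N generalizing M with
  | zero =>
    have h0 : ∀ (f : Fin 0 → Bool) (k : ℕ), pathPos f k = 0 := by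
      intro f k; unfold pathPos; simp
    simp only [Nat.cast_zero] at hpar ⊢
    rcases eq_or_ne M 0 with rfl | hne
    · rw [Finset.filter_true_of_mem
        (fun f _ => ⟨h0 f 0, fun k _ => by rw [h0]; exact ha⟩)]
      have e1 : chooseZ 0 (((0:ℤ) - 0)/2) = 1 := by unfold chooseZ; norm_num
      have e2 : chooseZ 0 (((0:ℤ) - 0)/2 + a - 1) = 0 :=
        chooseZ_eq_zero (by omega)
      rw [e1, e2]
      simp
    · obtain ⟨t, ht⟩ := hpar
      rw [Finset.filter_false_of_mem
        (fun f _ h => hne (by rw [h0 f 0] at h; exact h.1.symm))]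
      have hj : ((0:ℤ) - M)/2 = t := by omega
      have e1 : chooseZ 0 t = 0 := chooseZ_eq_zero (by omega)
      have e2 : chooseZ 0 (t + a - 1) = 0 := chooseZ_eq_zero (by omega)
      rw [hj, e1, e2]
      simp
  | succ N ih =>
    push_cast at hpar ⊢
    obtain ⟨t, ht⟩ := hpar
    rw [card_step N M a hM]
    have hj : ((N:ℤ) + 1 - M)/2 = t := by omega
    by_cases hMa : a ≤ M - 1
    · rw [ih (M - 1) hMa ⟨t, by omega⟩, ih (M + 1) (by omega) ⟨t - 1, by omega⟩]
      have e1 : ((N:ℤ) - (M - 1))/2 = t := by omega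
      have e2 : ((N:ℤ) - (M + 1))/2 = t - 1 := by omega
      rw [hj, e1, e2, chooseZ_pascal N t, chooseZ_pascal N (t + a - 1)]
      ring
    · have hMeq : M = a := by omega
      have hzero : (Finset.univ.filter (fun g : Fin N → Bool =>
          pathPos g N = M - 1 ∧ ∀ k ≤ N, a ≤ pathPos g k)).card = 0 := by
        rw [Finset.card_eq_zero, Finset.filter_eq_empty_iff]
        rintro g - ⟨h1, h2⟩
        have := h2 N le_rfl
        omega
      rw [hzero, ih (M + 1) (by omega) ⟨t - 1, by omega⟩]
      have e2 : ((N:ℤ) - (M + 1))/2 = t - 1 := by omega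
      have hsym : chooseZ (N:ℤ) t = chooseZ (N:ℤ) (t + a - 1) := by
        rw [chooseZ_symm N t]
        congr 1
        omega
      rw [hj, e2, chooseZ_pascal N t, chooseZ_pascal N (t + a - 1), hsym]
      push_cast
      ring
end

section
/- For all natural numbers n ≥ 1 and k ≥ 1: Σ_{j=0}^{n} (−1)^j · C(j+n+k−2, 2j+k−2) · C(2j+k−1, j) = 2·(−1)^n. -/
lemma chooseZ_of_neg {a b : ℤ} (h : b < 0) : chooseZ a b = 0 := by
  unfold chooseZ; rw [if_neg]; omega

lemma chooseZ_of_lt {a b : ℤ} (h : a < b) : chooseZ a b = 0 := by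
  unfold chooseZ; rw [if_neg]; omega

lemma chooseZ_natCast_s6 (a b : ℕ) : chooseZ (a : ℤ) (b : ℤ) = (a.choose b : ℤ) := by
  unfold chooseZ
  split_ifs with h
  · simp
  · have hab : a < b := by omega
    rw [Nat.choose_eq_zero_of_lt hab]; simp

lemma chooseZ_zero_right {a : ℤ} (h : 0 ≤ a) : chooseZ a 0 = 1 := by
  lift a to ℕ using h with A
  rw [show (0:ℤ) = ((0:ℕ):ℤ) by norm_num, chooseZ_natCast_s6]
  simp

lemma chooseZ_one_right {a : ℤ} (h : 0 ≤ a) : chooseZ a 1 = a := by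
  lift a to ℕ using h with A
  rw [show (1:ℤ) = ((1:ℕ):ℤ) by norm_num, chooseZ_natCast_s6]
  simp [Nat.choose_one_right]

lemma chooseZ_symm_s6 (a b : ℤ) (ha : 0 ≤ a) : chooseZ a b = chooseZ a (a - b) := by
  rcases lt_or_ge b 0 with hb | hb
  · rw [chooseZ_of_neg hb, chooseZ_of_lt (by omega)]
  rcases le_or_gt b a with hba | hba
  · lift a to ℕ using ha with A
    lift b to ℕ using hb with B
    have hBA : B ≤ A := by exact_mod_cast hba
    rw [chooseZ_natCast_s6, show (A:ℤ) - (B:ℤ) = ((A - B : ℕ) : ℤ) by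
      rw [Nat.cast_sub hBA], chooseZ_natCast_s6]
    exact_mod_cast (Nat.choose_symm hBA).symm
  · rw [chooseZ_of_lt hba, chooseZ_of_neg (by omega)]

lemma chooseZ_mul_top (a b : ℤ) (ha : 0 ≤ a) :
    (a + 1) * chooseZ a b = (a + 1 - b) * chooseZ (a + 1) b := by
  rcases lt_or_ge b 0 with hb | hb
  · rw [chooseZ_of_neg hb, chooseZ_of_neg hb]; ring
  rcases le_or_gt b (a + 1) with hba | hba
  · lift a to ℕ using ha with A
    lift b to ℕ using hb with B
    have hB : B ≤ A + 1 := by exact_mod_cast hba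
    rw [chooseZ_natCast_s6, show (A:ℤ) + 1 = ((A + 1 : ℕ) : ℤ) by push_cast; ring,
      chooseZ_natCast_s6]
    have h := Nat.choose_mul_succ_eq A B
    zify [hB] at h
    push_cast
    linarith [h]
  · rw [chooseZ_of_lt (by omega), chooseZ_of_lt (by omega)]; ring

lemma chooseZ_mul_bot (a b : ℤ) (ha : 0 ≤ a) :
    b * chooseZ a b = (a + 1 - b) * chooseZ a (b - 1) := by
  rcases lt_or_ge b 0 with hb | hb
  · rw [chooseZ_of_neg hb, chooseZ_of_neg (by omega)]; ring
  rcases eq_or_lt_of_le hb with hb0 | hb1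
  · rw [← hb0, chooseZ_of_neg (show (0:ℤ)-1 < 0 by norm_num)]; ring
  rcases le_or_gt b a with hba | hba
  · lift a to ℕ using ha with A
    lift b to ℕ using hb with B
    have hB1 : 1 ≤ B := by exact_mod_cast hb1
    obtain ⟨B', rfl⟩ : ∃ B', B = B' + 1 := ⟨B - 1, by omega⟩
    have hBA : B' + 1 ≤ A := by exact_mod_cast hba
    rw [chooseZ_natCast_s6, show ((B' + 1 : ℕ) : ℤ) - 1 = ((B' : ℕ) : ℤ) by push_cast; ring,
      chooseZ_natCast_s6]
    have h := Nat.choose_succ_right_eq A B'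
    zify [show B' ≤ A by omega] at h
    push_cast
    linarith [h]
  · rcases eq_or_lt_of_le (by omega : a + 1 ≤ b) with hb2 | hb2
    · rw [chooseZ_of_lt hba, show a + 1 - b = 0 by omega]; ring
    · rw [chooseZ_of_lt hba, chooseZ_of_lt (by omega)]; ring

/-- The WZ-certificate pointwise identity for the inductive step. -/
lemma stmt6_step (N K J : ℤ) (hN : 1 ≤ N) (hK : 1 ≤ K) (hJ : 0 ≤ J) :
    ((N+1)*N*(N+K)*(N+K-1)) * (chooseZ (J+(N+1)+K-2) (N+1-J) * chooseZ (2*J+K-1) J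
        + chooseZ (J+N+K-2) (N-J) * chooseZ (2*J+K-1) J)
    = (2*N+K)*(((K-3)*(N+1)^2+(K-2)*(K-3)*(N+1)-(K-1)*(K-2))
          +(2*(N+1)^2+(2*K-4)*(N+1)-(K-1))*(J+1))
        * chooseZ (J+(N+1)+K-2) (N-J) * chooseZ (2*J+K-1) J
      + (2*N+K)*(((K-3)*(N+1)^2+(K-2)*(K-3)*(N+1)-(K-1)*(K-2))
          +(2*(N+1)^2+(2*K-4)*(N+1)-(K-1))*J)
        * chooseZ (J+N+K-2) (N+1-J) * chooseZ (2*J+K-3) (J-1) := by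
  have hA : (J+(N+1)+K-2) * chooseZ (J+N+K-2) (N-J)
      = (2*J+K-1) * chooseZ (J+(N+1)+K-2) (N-J) := by
    have h := chooseZ_mul_top (J+N+K-2) (N-J) (by omega)
    rw [show J+N+K-2+1 = J+(N+1)+K-2 by ring] at h
    rw [show J+(N+1)+K-2-(N-J) = 2*J+K-1 by ring] at h
    exact h
  have hB : (N+1-J) * chooseZ (J+(N+1)+K-2) (N+1-J)
      = (2*J+K-1) * chooseZ (J+(N+1)+K-2) (N-J) := by
    have h := chooseZ_mul_bot (J+(N+1)+K-2) (N+1-J) (by omega)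
    rw [show J+(N+1)+K-2+1-(N+1-J) = 2*J+K-1 by ring] at h
    rw [show N+1-J-1 = N-J by ring] at h
    exact h
  rcases eq_or_lt_of_le hJ with hJ0 | hJ1
  · -- case J = 0
    have hJ' : J = 0 := hJ0.symm
    subst hJ'
    have hd1 : chooseZ (2*(0:ℤ)+K-1) 0 = 1 := chooseZ_zero_right (by omega)
    have hd2 : chooseZ (2*(0:ℤ)+K-3) ((0:ℤ)-1) = 0 := chooseZ_of_neg (by norm_num)
    rw [hd1, hd2]
    linear_combination ((N+1)*N*(N+K))*hA + (N*(N+K)*(N+K-1))*hB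
  · -- case 1 ≤ J
    have h1 : (J+(N+1)+K-2) * chooseZ (J+N+K-2) (N-J)
        = (N+1-J) * chooseZ (J+(N+1)+K-2) (N+1-J) := hA.trans hB.symm
    have h2 : (J+(N+1)+K-2) * chooseZ (J+N+K-2) (N+1-J)
        = (2*J+K-2) * chooseZ (J+(N+1)+K-2) (N+1-J) := by
      have h := chooseZ_mul_top (J+N+K-2) (N+1-J) (by omega)
      rw [show J+N+K-2+1 = J+(N+1)+K-2 by ring] at h
      rw [show J+(N+1)+K-2-(N+1-J) = 2*J+K-2 by ring] at h
      exact h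
    have hC : J * chooseZ (2*J+K-1) J = (J+K) * chooseZ (2*J+K-1) (J-1) := by
      have h := chooseZ_mul_bot (2*J+K-1) J (by omega)
      rw [show 2*J+K-1+1-J = J+K by ring] at h
      exact h
    have hD : (2*J+K-1) * chooseZ (2*J+K-2) (J-1)
        = (J+K) * chooseZ (2*J+K-1) (J-1) := by
      have h := chooseZ_mul_top (2*J+K-2) (J-1) (by omega)
      rw [show 2*J+K-2+1 = 2*J+K-1 by ring] at h
      rw [show 2*J+K-1-(J-1) = J+K by ring] at h
      exact h
    have hE : (2*J+K-2) * chooseZ (2*J+K-3) (J-1)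
        = (J+K-1) * chooseZ (2*J+K-2) (J-1) := by
      have h := chooseZ_mul_top (2*J+K-3) (J-1) (by omega)
      rw [show 2*J+K-3+1 = 2*J+K-2 by ring] at h
      rw [show 2*J+K-2-(J-1) = J+K-1 by ring] at h
      exact h
    have h3 : J*(J+K-1) * chooseZ (2*J+K-1) J
        = (2*J+K-1)*(2*J+K-2) * chooseZ (2*J+K-3) (J-1) := by
      linear_combination (J+K-1)*hC - (J+K-1)*hD - (2*J+K-1)*hE
    have hW : (J+(N+1)+K-2)*((2*J+K-1)*(2*J+K-2)) ≠ 0 :=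
      mul_ne_zero (by omega) (mul_ne_zero (by omega) (by omega))
    refine mul_left_cancel₀ hW ?_
    linear_combination
      ((N+1)*N*(N+K)*(N+K-1)*(2*J+K-1)*(2*J+K-2)*chooseZ (2*J+K-1) J) * h1
      + ((2*N+K)*(((K-3)*(N+1)^2+(K-2)*(K-3)*(N+1)-(K-1)*(K-2))
          +(2*(N+1)^2+(2*K-4)*(N+1)-(K-1))*(J+1))
          *(J+(N+1)+K-2)*(2*J+K-2)*chooseZ (2*J+K-1) J) * hB
      - ((2*N+K)*(((K-3)*(N+1)^2+(K-2)*(K-3)*(N+1)-(K-1)*(K-2))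
          +(2*(N+1)^2+(2*K-4)*(N+1)-(K-1))*J)
          *(2*J+K-1)*(2*J+K-2)*chooseZ (2*J+K-3) (J-1)) * h2
      + ((2*N+K)*(((K-3)*(N+1)^2+(K-2)*(K-3)*(N+1)-(K-1)*(K-2))
          +(2*(N+1)^2+(2*K-4)*(N+1)-(K-1))*J)
          *(2*J+K-2)*chooseZ (J+(N+1)+K-2) (N+1-J)) * h3

/-- The telescoping certificate function. -/
def Haux (N K : ℤ) (j : ℕ) : ℤ :=
  (-1)^(j+1) * ((2*N+K)*(((K-3)*(N+1)^2+(K-2)*(K-3)*(N+1)-(K-1)*(K-2))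
      +(2*(N+1)^2+(2*K-4)*(N+1)-(K-1))*(j:ℤ)))
    * chooseZ ((j:ℤ)+N+K-2) (N+1-(j:ℤ)) * chooseZ (2*(j:ℤ)+K-3) ((j:ℤ)-1)

lemma stmt6_aux (k : ℕ) (hk : 1 ≤ k) : ∀ n : ℕ, 1 ≤ n →
    (∑ j ∈ Finset.range (n+1),
      (-1:ℤ)^j * chooseZ ((j:ℤ)+n+k-2) ((n:ℤ)-j) * chooseZ (2*(j:ℤ)+k-1) j)
    = 2*(-1)^n := by
  refine Nat.le_induction ?_ ?_
  · -- base case n = 1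
    rw [Finset.sum_range_succ, Finset.sum_range_succ, Finset.sum_range_zero]
    push_cast
    rw [show ((1:ℤ)+(k:ℤ)-2) = (k:ℤ)-1 by ring]
    rw [show ((0:ℤ)+(k:ℤ)-1) = (k:ℤ)-1 by ring]
    rw [show ((2:ℤ)+(k:ℤ)-2) = (k:ℤ) by ring]
    rw [show ((2:ℤ)+(k:ℤ)-1) = (k:ℤ)+1 by ring]
    rw [chooseZ_one_right (by omega : (0:ℤ) ≤ (k:ℤ)-1)]
    rw [chooseZ_zero_right (by omega : (0:ℤ) ≤ (k:ℤ)-1)]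
    rw [chooseZ_zero_right (by omega : (0:ℤ) ≤ (k:ℤ))]
    rw [chooseZ_one_right (by omega : (0:ℤ) ≤ (k:ℤ)+1)]
    ring
  · -- inductive step
    intro n hn IH
    have hn' : (1:ℤ) ≤ (n:ℤ) := by exact_mod_cast hn
    have hk' : (1:ℤ) ≤ (k:ℤ) := by exact_mod_cast hk
    push_cast at IH ⊢
    have tele : ∀ j ∈ Finset.range (n+1+1),
        (((n:ℤ)+1)*(n:ℤ)*((n:ℤ)+(k:ℤ))*((n:ℤ)+(k:ℤ)-1)) *
          ((-1:ℤ)^j * chooseZ ((j:ℤ)+((n:ℤ)+1)+(k:ℤ)-2) ((n:ℤ)+1-(j:ℤ)) * chooseZ (2*(j:ℤ)+(k:ℤ)-1) (j:ℤ)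
            + (-1:ℤ)^j * chooseZ ((j:ℤ)+(n:ℤ)+(k:ℤ)-2) ((n:ℤ)-(j:ℤ)) * chooseZ (2*(j:ℤ)+(k:ℤ)-1) (j:ℤ))
        = Haux (n:ℤ) (k:ℤ) (j+1) - Haux (n:ℤ) (k:ℤ) j := by
      intro j hj
      have hstep := stmt6_step (n:ℤ) (k:ℤ) (j:ℤ) hn' hk' (by positivity)
      unfold Haux
      push_cast
      rw [show ((j:ℤ)+1+(n:ℤ)+(k:ℤ)-2) = (j:ℤ)+((n:ℤ)+1)+(k:ℤ)-2 by ring]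
      rw [show ((n:ℤ)+1-((j:ℤ)+1)) = (n:ℤ)-(j:ℤ) by ring]
      rw [show (2*((j:ℤ)+1)+(k:ℤ)-3) = 2*(j:ℤ)+(k:ℤ)-1 by ring]
      rw [show ((j:ℤ)+1-1) = (j:ℤ) by ring]
      linear_combination ((-1:ℤ)^j) * hstep
    have key : (((n:ℤ)+1)*(n:ℤ)*((n:ℤ)+(k:ℤ))*((n:ℤ)+(k:ℤ)-1)) *
        ((∑ j ∈ Finset.range (n+1+1),
          (-1:ℤ)^j * chooseZ ((j:ℤ)+((n:ℤ)+1)+(k:ℤ)-2) ((n:ℤ)+1-(j:ℤ)) * chooseZ (2*(j:ℤ)+(k:ℤ)-1) (j:ℤ))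
          + ∑ j ∈ Finset.range (n+1+1),
          (-1:ℤ)^j * chooseZ ((j:ℤ)+(n:ℤ)+(k:ℤ)-2) ((n:ℤ)-(j:ℤ)) * chooseZ (2*(j:ℤ)+(k:ℤ)-1) (j:ℤ)) = 0 := by
      rw [← Finset.sum_add_distrib, Finset.mul_sum]
      rw [Finset.sum_congr rfl tele]
      rw [Finset.sum_range_sub (fun j => Haux (n:ℤ) (k:ℤ) j) (n+1+1)]
      have hz1 : Haux (n:ℤ) (k:ℤ) (n+1+1) = 0 := by
        unfold Haux
        rw [chooseZ_of_neg (show (n:ℤ)+1-((n+1+1:ℕ):ℤ) < 0 by push_cast; omega)]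
        ring
      have hz0 : Haux (n:ℤ) (k:ℤ) 0 = 0 := by
        unfold Haux
        rw [chooseZ_of_neg (show (((0:ℕ)):ℤ)-1 < 0 by norm_num)]
        ring
      rw [hz1, hz0]
      ring
    have hq0 : (((n:ℤ)+1)*(n:ℤ)*((n:ℤ)+(k:ℤ))*((n:ℤ)+(k:ℤ)-1)) ≠ 0 := by
      refine mul_ne_zero (mul_ne_zero (mul_ne_zero ?_ ?_) ?_) ?_ <;> omega
    have hsum : (∑ j ∈ Finset.range (n+1+1),
          (-1:ℤ)^j * chooseZ ((j:ℤ)+((n:ℤ)+1)+(k:ℤ)-2) ((n:ℤ)+1-(j:ℤ)) * chooseZ (2*(j:ℤ)+(k:ℤ)-1) (j:ℤ))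
          + ∑ j ∈ Finset.range (n+1+1),
          (-1:ℤ)^j * chooseZ ((j:ℤ)+(n:ℤ)+(k:ℤ)-2) ((n:ℤ)-(j:ℤ)) * chooseZ (2*(j:ℤ)+(k:ℤ)-1) (j:ℤ) = 0 := by
      rcases mul_eq_zero.mp key with h | h
      · exact absurd h hq0
      · exact h
    have hlast : ∑ j ∈ Finset.range (n+1+1),
        (-1:ℤ)^j * chooseZ ((j:ℤ)+(n:ℤ)+(k:ℤ)-2) ((n:ℤ)-(j:ℤ)) * chooseZ (2*(j:ℤ)+(k:ℤ)-1) (j:ℤ)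
        = 2*(-1)^n := by
      rw [Finset.sum_range_succ]
      rw [chooseZ_of_neg (show (n:ℤ)-((n+1:ℕ):ℤ) < 0 by push_cast; omega)]
      rw [IH]
      ring
    rw [hlast] at hsum
    have hpow : ((-1:ℤ))^(n+1) = -(-1:ℤ)^n := by rw [pow_succ]; ring
    rw [hpow]
    linarith [hsum]

/-- `Σ_{j=0}^{n} (−1)^j C(j+n+k−2, 2j+k−2) C(2j+k−1, j) = 2(−1)^n` for `n, k ≥ 1`. -/
theorem stmt6 (n k : ℕ) (hn : 1 ≤ n) (hk : 1 ≤ k) :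
    ∑ j ∈ Finset.range (n + 1),
      (-1 : ℤ) ^ j * chooseZ ((j : ℤ) + n + k - 2) (2 * j + k - 2)
        * chooseZ (2 * (j : ℤ) + k - 1) j
    = 2 * (-1 : ℤ) ^ n := by
  have h := stmt6_aux k hk n hn
  rw [← h]
  refine Finset.sum_congr rfl (fun j hj => ?_)
  rw [chooseZ_symm_s6 ((j:ℤ)+n+k-2) (2*j+k-2) (by omega)]
  rw [show ((j:ℤ)+n+k-2-(2*(j:ℤ)+(k:ℤ)-2)) = (n:ℤ)-(j:ℤ) by ring]
end

section
/- Fix l ≥ 2 and k ≥ 1, and consider weighted lattice paths from (0,0) with steps (+1,+1),(−1,+1) subject to type-1 filter restrictions at x = lk−1 and x = l(k+2)−1 (at each filter position d ∈ {lk−1, l(k+2)−1}: from x = d only the right step with weight 1; from x = d+1 either the right step with weight 1 or the left step with weight 2; all other steps weight 1). Let Z(M,N) be the weighted path count without long steps, and Z′(M,N) the weighted path count when additionally the long steps (l(k+2)−2, y) → (lk−1, y+1) of weight 1 are allowed. Then for lk−1 ≤ M ≤ l(k+2)−2: (a) Z′(M,N) = Z(M,N) whenever N ≤ M + 2l − 2;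 (b) Z′(M,N) = Z(M,N) + Z(M+2l, N) whenever M + 2l ≤ N ≤ l(k+4) − 2. -/
/-- Displacement of a step: `0` = right (+1), `1` = left (−1),
`2` = long step from `x = l(k+2)−2` to `x = lk−1`, i.e. displacement `1 − 2l`. -/
def disp (l : ℕ) (s : Fin 3) : ℤ :=
  if s = 0 then 1 else if s = 1 then -1 else 1 - 2 * (l : ℤ)

/-- Position after the first `m` steps of a path encoded by `f : Fin N → Fin 3`. -/
def posL (l : ℕ) {N : ℕ} (f : Fin N → Fin 3) (m : ℕ) : ℤ :=
  ∑ i : Fin N, if (i : ℕ) < m then disp l (f i) else 0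

/-- A path is allowed (long steps permitted): long steps only start at
`x = l(k+2)−2`, and from the filter lines `x = lk−1` and `x = l(k+2)−1`
only the right step is allowed. -/
def allowedL (l k : ℕ) {N : ℕ} (f : Fin N → Fin 3) : Prop :=
  ∀ i : Fin N,
    (f i = 2 → posL l f (i : ℕ) = (l : ℤ) * (k + 2) - 2) ∧
    (posL l f (i : ℕ) = (l : ℤ) * k - 1 → f i = 0) ∧
    (posL l f (i : ℕ) = (l : ℤ) * (k + 2) - 1 → f i = 0)

instance (l k : ℕ) {N : ℕ} (f : Fin N → Fin 3) : Decidable (allowedL l k f) := by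
  unfold allowedL; infer_instance

/-- Weight of a path: left steps from `x = lk` and from `x = l(k+2)` have
weight 2, all other steps weight 1. -/
def weightL (l k : ℕ) {N : ℕ} (f : Fin N → Fin 3) : ℤ :=
  ∏ i : Fin N,
    if (posL l f (i : ℕ) = (l : ℤ) * k ∨ posL l f (i : ℕ) = (l : ℤ) * (k + 2)) ∧ f i = 1
    then 2 else 1

/-- Weighted number of paths from (0,0) to (M,N), long steps allowed. -/
def Zlong (l k : ℕ) (M : ℤ) (N : ℕ) : ℤ :=
  ∑ f ∈ Finset.univ.filter (fun f : Fin N → Fin 3 =>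
      allowedL l k f ∧ posL l f N = M), weightL l k f

/-- Weighted number of paths from (0,0) to (M,N) without long steps. -/
def Zshort (l k : ℕ) (M : ℤ) (N : ℕ) : ℤ :=
  ∑ f ∈ Finset.univ.filter (fun f : Fin N → Fin 3 =>
      allowedL l k f ∧ (∀ i : Fin N, f i ≠ 2) ∧ posL l f N = M), weightL l k f

namespace Stmt13

lemma disp_le (l : ℕ) (s : Fin 3) : disp l s ≤ 1 := by
  fin_cases s <;> simp [disp] <;> omega

lemma disp_ge (l : ℕ) (s : Fin 3) (h : s ≠ 2) : -1 ≤ disp l s := by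
  fin_cases s <;> simp_all [disp]

lemma disp_eq_one (l : ℕ) (hl : 1 ≤ l) (s : Fin 3) (h : disp l s = 1) : s = 0 := by
  fin_cases s <;> simp_all [disp] <;> omega

lemma posL_zero (l : ℕ) {N : ℕ} (f : Fin N → Fin 3) : posL l f 0 = 0 := by
  simp [posL]

lemma posL_succ (l : ℕ) {N : ℕ} (f : Fin N → Fin 3) {m : ℕ} (h : m < N) :
    posL l f (m + 1) = posL l f m + disp l (f ⟨m, h⟩) := by
  unfold posL
  have key : ∀ i : Fin N, (if (i : ℕ) < m + 1 then disp l (f i) else 0)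
      = (if (i : ℕ) < m then disp l (f i) else 0)
        + (if i = ⟨m, h⟩ then disp l (f i) else 0) := by
    intro i
    by_cases h1 : i = ⟨m, h⟩
    · subst h1; simp
    · have h2 : (i : ℕ) ≠ m := fun hh => h1 (Fin.ext hh)
      by_cases h3 : (i : ℕ) < m
      · rw [if_pos (by omega), if_pos h3, if_neg h1]; ring
      · rw [if_neg (by omega), if_neg h3, if_neg h1]; ring
  rw [Finset.sum_congr rfl (fun i _ => key i), Finset.sum_add_distrib,
    Finset.sum_ite_eq' Finset.univ (⟨m, h⟩ : Fin N)]
  simp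

lemma posL_stable (l : ℕ) {N : ℕ} (f : Fin N → Fin 3) {m : ℕ} (h : N ≤ m) :
    posL l f m = posL l f N := by
  unfold posL
  exact Finset.sum_congr rfl (fun i _ => by
    rw [if_pos (by omega), if_pos i.isLt])

lemma posL_sub_le (l : ℕ) {N : ℕ} (f : Fin N → Fin 3) {m₁ m₂ : ℕ} (h : m₁ ≤ m₂) :
    posL l f m₂ ≤ posL l f m₁ + ((m₂ : ℤ) - m₁) := by
  induction m₂, h using Nat.le_induction with
  | base => simp
  | succ n hn ih =>
    by_cases hN : n < N
    · have := disp_le l (f ⟨n, hN⟩)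
      rw [posL_succ l f hN]; push_cast; linarith
    · rw [posL_stable l f (by omega), ← posL_stable l f (le_of_not_gt hN)]
      push_cast; linarith

lemma posL_le (l : ℕ) {N : ℕ} (f : Fin N → Fin 3) (m : ℕ) : posL l f m ≤ m := by
  have := posL_sub_le l f (Nat.zero_le m)
  rw [posL_zero] at this; simpa using this


lemma stays (l k : ℕ) {N : ℕ} {f : Fin N → Fin 3} (hf : allowedL l k f)
    {d : ℤ} (hd : d = (l : ℤ) * k - 1 ∨ d = (l : ℤ) * (k + 2) - 1)
    {m₁ m₂ : ℕ} (h1 : d ≤ posL l f m₁) (h12 : m₁ ≤ m₂) (h2 : m₂ ≤ N) :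
    d ≤ posL l f m₂ := by
  induction m₂, h12 using Nat.le_induction with
  | base => exact h1
  | succ n hn ih =>
    have hnN : n < N := by omega
    have ihn := ih (by omega)
    rw [posL_succ l f hnN]
    rcases eq_or_lt_of_le ihn with he | hlt
    · have h0 : f ⟨n, hnN⟩ = 0 := by
        rcases hd with rfl | rfl
        · exact (hf ⟨n, hnN⟩).2.1 he.symm
        · exact (hf ⟨n, hnN⟩).2.2 he.symm
      rw [h0]; simp [disp]; linarith
    · by_cases h2' : f ⟨n, hnN⟩ = 2
      · have hp := (hf ⟨n, hnN⟩).1 h2'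
        simp only at hp
        rcases hd with rfl | rfl
        · rw [h2', hp]
          have : disp l 2 = 1 - 2 * l := by simp [disp]
          rw [this]; linarith
        · exfalso; rw [hp] at ihn; linarith
      · have := disp_ge l _ h2'
        linarith

lemma posL_update (l : ℕ) {N : ℕ} (f g : Fin N → Fin 3) (t : Fin N)
    (hfg : ∀ i, i ≠ t → f i = g i) (m : ℕ) :
    posL l f m = posL l g m
      + (if (t : ℕ) < m then disp l (f t) - disp l (g t) else 0) := by
  unfold posL
  have key : ∀ i : Fin N, (if (i : ℕ) < m then disp l (f i) else 0)
      = (if (i : ℕ) < m then disp l (g i) else 0)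
        + (if i = t then (if (t : ℕ) < m then disp l (f t) - disp l (g t) else 0) else 0) := by
    intro i
    by_cases hit : i = t
    · subst hit; by_cases him : (i : ℕ) < m <;> simp [him]
    · rw [hfg i hit]; simp [hit]
  rw [Finset.sum_congr rfl (fun i _ => key i), Finset.sum_add_distrib,
    Finset.sum_ite_eq' Finset.univ t]
  simp

lemma pos_after_long (l k : ℕ) {N : ℕ} {f : Fin N → Fin 3} (hall : allowedL l k f)
    (i : Fin N) (hi : f i = 2) : posL l f ((i : ℕ) + 1) = (l : ℤ) * k - 1 := by
  rw [posL_succ l f i.isLt]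
  have h1 := (hall i).1 hi
  have hd : disp l 2 = 1 - 2 * l := by simp [disp]
  simp only [Fin.eta]
  rw [hi, h1, hd]; ring

lemma not_two_later (l k : ℕ) {N : ℕ} {f : Fin N → Fin 3} (hall : allowedL l k f)
    (hN2 : (N : ℤ) ≤ (l : ℤ) * (k + 4) - 2) {t t' : Fin N}
    (ht : f t = 2) (ht' : f t' = 2) (hlt : (t : ℕ) < (t' : ℕ)) : False := by
  have hC := (hall t).1 ht
  have hC' := (hall t').1 ht'
  have hA := pos_after_long l k hall t ht
  have h1 := posL_le l f t
  have h2 := posL_sub_le l f (show (t : ℕ) + 1 ≤ (t' : ℕ) by omega)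
  rw [hA, hC'] at h2
  rw [hC] at h1
  have h3 : ((t' : ℕ) : ℤ) ≤ (N : ℤ) - 1 := by
    have := t'.isLt; omega
  have e1 : (l : ℤ) * ((k : ℤ) + 2) = l * k + 2 * l := by ring
  have e2 : (l : ℤ) * ((k : ℤ) + 4) = l * k + 4 * l := by ring
  push_cast at h1 h2 h3 ⊢
  linarith

lemma uniq_long (l k : ℕ) {N : ℕ} {f : Fin N → Fin 3} (hall : allowedL l k f)
    (hN2 : (N : ℤ) ≤ (l : ℤ) * (k + 4) - 2) {t t' : Fin N}
    (ht : f t = 2) (ht' : f t' = 2) : t = t' := by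
  rcases lt_trichotomy (t : ℕ) (t' : ℕ) with h | h | h
  · exact absurd (not_two_later l k hall hN2 ht ht' h) (by simp)
  · exact Fin.ext h
  · exact absurd (not_two_later l k hall hN2 ht' ht h) (by simp)

def toShort {N : ℕ} (f : Fin N → Fin 3) : Fin N → Fin 3 :=
  fun i => if f i = 2 then 0 else f i

def toLong (l k : ℕ) {N : ℕ} (g : Fin N → Fin 3) : Fin N → Fin 3 :=
  fun i => if posL l g (i : ℕ) = (l : ℤ) * (k + 2) - 2 ∧ g i = 0 then 2 else g i

lemma forward (l k : ℕ) (hl : 2 ≤ l) (hk : 1 ≤ k) (M : ℤ) {N : ℕ}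
    (hM1 : (l : ℤ) * k - 1 ≤ M) (hM2 : M ≤ (l : ℤ) * (k + 2) - 2)
    (hN2 : (N : ℤ) ≤ (l : ℤ) * (k + 4) - 2)
    {f : Fin N → Fin 3} (hall : allowedL l k f) (hposN : posL l f N = M)
    {t : Fin N} (ht : f t = 2) :
    (allowedL l k (toShort f) ∧ (∀ i, toShort f i ≠ 2)
        ∧ posL l (toShort f) N = M + 2 * l)
    ∧ toLong l k (toShort f) = f ∧ weightL l k (toShort f) = weightL l k f := by
  have e1 : (l : ℤ) * ((k : ℤ) + 2) = l * k + 2 * l := by ring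
  have e2 : (l : ℤ) * ((k : ℤ) + 4) = l * k + 4 * l := by ring
  have hl' : (2 : ℤ) ≤ (l : ℤ) := by exact_mod_cast hl
  have huniq : ∀ i, f i = 2 → i = t := fun i hi => uniq_long l k hall hN2 hi ht
  set g := toShort f with hg
  have hgt : g t = 0 := by simp [hg, toShort, ht]
  have hgi : ∀ i, i ≠ t → g i = f i := by
    intro i hi
    have h2 : f i ≠ 2 := fun h => hi (huniq i h)
    simp [hg, toShort, h2]
  have hg2 : ∀ i, g i ≠ 2 := by
    intro i
    by_cases h : f i = 2 <;> simp [hg, toShort, h]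
  have hupd := posL_update l f g t (fun i hi => (hgi i hi).symm)
  have hdd : disp l (f t) - disp l (g t) = -(2 * l) := by
    rw [ht, hgt]; simp [disp]
  have hposg' : ∀ m, m ≤ (t : ℕ) → posL l g m = posL l f m := by
    intro m hm
    have := hupd m
    rw [hdd, if_neg (by omega)] at this
    linarith
  have hposg : ∀ m, (t : ℕ) < m → posL l g m = posL l f m + 2 * l := by
    intro m hm
    have := hupd m
    rw [hdd, if_pos hm] at this
    linarith
  have hC := (hall t).1 ht
  have htC : (l : ℤ) * ((k : ℤ) + 2) - 2 ≤ ((t : ℕ) : ℤ) := by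
    have := posL_le l f t
    rw [hC] at this; exact this
  have hA := pos_after_long l k hall t ht
  have hbelow : ∀ m, m ≤ (t : ℕ) → posL l f m ≤ (l : ℤ) * (k + 2) - 2 := by
    intro m hm
    by_contra hcon
    push_neg at hcon
    have h1 : (l : ℤ) * ((k : ℤ) + 2) - 1 ≤ posL l f m := by linarith
    have h2 := stays l k hall (Or.inr rfl) h1 hm (le_of_lt t.isLt)
    rw [hC] at h2; linarith
  have habove : ∀ m, (t : ℕ) < m → m ≤ N → (l : ℤ) * k - 1 ≤ posL l f m := by
    intro m hm hmN
    exact stays l k hall (Or.inl rfl) (le_of_eq hA.symm) (by omega) hmN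
  have hupper : ∀ m, (t : ℕ) < m → m < N → posL l f m ≤ (l : ℤ) * (k + 2) - 3 := by
    intro m hm hmN
    have h1 := posL_sub_le l f (show (t : ℕ) + 1 ≤ m by omega)
    rw [hA] at h1
    have h2 : (m : ℤ) ≤ (N : ℤ) - 1 := by omega
    push_cast at h1 ⊢
    linarith
  have hallg : allowedL l k g := by
    intro i
    refine ⟨fun h => absurd h (hg2 i), ?_, ?_⟩
    · intro hp
      by_cases hit : (t : ℕ) < (i : ℕ)
      · exfalso
        have := habove i hit (le_of_lt i.isLt)
        rw [hposg i hit] at hp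
        linarith
      · rw [hposg' i (by omega)] at hp
        by_cases hit2 : i = t
        · exfalso; rw [hit2, hC] at hp; linarith
        · rw [hgi i hit2]; exact (hall i).2.1 hp
    · intro hp
      by_cases hit : (t : ℕ) < (i : ℕ)
      · rw [hposg i hit] at hp
        have hp' : posL l f i = (l : ℤ) * k - 1 := by linarith
        have h0 := (hall i).2.1 hp'
        have hit2 : i ≠ t := fun h => by rw [h] at hit; omega
        rw [hgi i hit2]; exact h0
      · exfalso
        rw [hposg' i (by omega)] at hp
        have := hbelow i (by omega)
        linarith
  refine ⟨⟨hallg, hg2, ?_⟩, ?_, ?_⟩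
  · rw [hposg N t.isLt, hposN]
  · funext i
    simp only [toLong]
    by_cases hit : i = t
    · subst hit
      rw [if_pos ⟨by rw [hposg' i le_rfl, hC], hgt⟩, ht]
    · rw [if_neg, hgi i hit]
      rintro ⟨hp, hz⟩
      by_cases hlt2 : (t : ℕ) < (i : ℕ)
      · rw [hposg i hlt2] at hp
        have := habove i hlt2 (le_of_lt i.isLt)
        linarith
      · have hi_lt : (i : ℕ) < (t : ℕ) := by
          rcases Nat.lt_or_ge (i : ℕ) (t : ℕ) with h | h
          · exact h
          · exfalso; exact hit (Fin.ext (by omega))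
        rw [hposg' i (by omega)] at hp
        rw [hgi i hit] at hz
        have hnext : posL l f ((i : ℕ) + 1) = (l : ℤ) * (k + 2) - 1 := by
          rw [posL_succ l f i.isLt]
          simp only [Fin.eta]
          rw [hz, hp]; simp [disp]; ring
        have := stays l k hall (Or.inr rfl) (le_of_eq hnext.symm)
          (show (i : ℕ) + 1 ≤ (t : ℕ) by omega) (le_of_lt t.isLt)
        rw [hC] at this; linarith
  · unfold weightL
    apply Finset.prod_congr rfl
    intro i _
    by_cases hit : i = t
    · subst hit
      rw [ht, hgt]
      rw [if_neg (by rintro ⟨-, h2⟩; exact absurd h2 (by decide)),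
        if_neg (by rintro ⟨-, h2⟩; exact absurd h2 (by decide))]
    · by_cases hlt2 : (t : ℕ) < (i : ℕ)
      · have hab := habove i hlt2 (le_of_lt i.isLt)
        have hub := hupper i hlt2 i.isLt
        have hcond : ((posL l g i = (l : ℤ) * k ∨ posL l g i = (l : ℤ) * (k + 2)) ∧ g i = 1)
            ↔ ((posL l f i = (l : ℤ) * k ∨ posL l f i = (l : ℤ) * (k + 2)) ∧ f i = 1) := by
          rw [hposg i hlt2, hgi i hit]
          constructor
          · rintro ⟨hp | hp, h1⟩
            · exfalso; linarith
            · exact ⟨Or.inl (by linarith), h1⟩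
          · rintro ⟨hp | hp, h1⟩
            · exact ⟨Or.inr (by linarith), h1⟩
            · exfalso; linarith
        rw [if_congr hcond rfl rfl]
      · rw [hposg' i (by omega), hgi i hit]

lemma backward (l k : ℕ) (hl : 2 ≤ l) (hk : 1 ≤ k) (M : ℤ) {N : ℕ}
    (hM1 : (l : ℤ) * k - 1 ≤ M) (hN2 : (N : ℤ) ≤ (l : ℤ) * (k + 4) - 2)
    {g : Fin N → Fin 3} (hall : allowedL l k g) (hno2 : ∀ i, g i ≠ 2)
    (hposN : posL l g N = M + 2 * l) :
    (allowedL l k (toLong l k g) ∧ posL l (toLong l k g) N = M)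
    ∧ (¬ ∀ i, toLong l k g i ≠ 2) ∧ toShort (toLong l k g) = g := by
  have e1 : (l : ℤ) * ((k : ℤ) + 2) = l * k + 2 * l := by ring
  have e2 : (l : ℤ) * ((k : ℤ) + 4) = l * k + 4 * l := by ring
  have hl' : (2 : ℤ) ≤ (l : ℤ) := by exact_mod_cast hl
  have hk' : (1 : ℤ) ≤ (k : ℤ) := by exact_mod_cast hk
  have hBpos : (0 : ℤ) < (l : ℤ) * ((k : ℤ) + 2) - 1 := by nlinarith
  have hQN : N ≤ N ∧ (l : ℤ) * ((k : ℤ) + 2) - 1 ≤ posL l g N :=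
    ⟨le_rfl, by rw [hposN]; linarith⟩
  have hex : ∃ m, m ≤ N ∧ (l : ℤ) * ((k : ℤ) + 2) - 1 ≤ posL l g m := ⟨N, hQN⟩
  set u₀ := Nat.find hex with hu₀def
  have hu₀ := Nat.find_spec hex
  rw [← hu₀def] at hu₀
  have hu₀pos : 0 < u₀ := by
    rcases Nat.eq_zero_or_pos u₀ with h | h
    · exfalso
      have := hu₀.2
      rw [h, posL_zero] at this
      linarith
    · exact h
  set u := u₀ - 1 with hudef
  have hmin : ∀ m, m < u₀ → ¬(m ≤ N ∧ (l : ℤ) * ((k : ℤ) + 2) - 1 ≤ posL l g m) :=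
    fun m hm => Nat.find_min hex hm
  have huN : u < N := by have := hu₀.1; omega
  have hbefore : ∀ m, m ≤ u → posL l g m ≤ (l : ℤ) * ((k : ℤ) + 2) - 2 := by
    intro m hm
    have h1 := hmin m (by omega)
    push_neg at h1
    have := h1 (by omega)
    linarith
  have hu1 : u + 1 = u₀ := by omega
  have hsucc : posL l g (u + 1) = posL l g u + disp l (g ⟨u, huN⟩) := posL_succ l g huN
  have hdle := disp_le l (g ⟨u, huN⟩)
  have hpu : posL l g u = (l : ℤ) * ((k : ℤ) + 2) - 2 := by
    have h1 := hbefore u le_rfl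
    have h2 := hu₀.2
    rw [← hu1] at h2
    linarith
  have hdisp1 : disp l (g ⟨u, huN⟩) = 1 := by
    have h2 := hu₀.2
    rw [← hu1, hsucc, hpu] at h2
    linarith
  have hgu : g ⟨u, huN⟩ = 0 := disp_eq_one l (by omega) _ hdisp1
  have hBu : posL l g (u + 1) = (l : ℤ) * ((k : ℤ) + 2) - 1 := by
    rw [hsucc, hpu, hdisp1]; ring
  have hafter : ∀ m, u < m → m ≤ N → (l : ℤ) * ((k : ℤ) + 2) - 1 ≤ posL l g m := by
    intro m hm hmN
    exact stays l k hall (Or.inr rfl) (le_of_eq hBu.symm) (by omega) hmN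
  have hcross : ∀ i : Fin N, posL l g i = (l : ℤ) * ((k : ℤ) + 2) - 2 → g i = 0 →
      (i : ℕ) = u := by
    intro i hpi hgi0
    by_contra hne
    have hnext : posL l g ((i : ℕ) + 1) = (l : ℤ) * ((k : ℤ) + 2) - 1 := by
      rw [posL_succ l g i.isLt]
      simp only [Fin.eta]
      rw [hgi0, hpi]; simp [disp]; ring
    rcases Nat.lt_or_ge (i : ℕ) u with h | h
    · have := stays l k hall (Or.inr rfl) (le_of_eq hnext.symm)
        (show (i : ℕ) + 1 ≤ u by omega) (by omega)
      rw [hpu] at this; linarith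
    · have hui : u < (i : ℕ) := by omega
      have := stays l k hall (Or.inr rfl) (le_of_eq hBu.symm)
        (show u + 1 ≤ (i : ℕ) by omega) (le_of_lt i.isLt)
      rw [hpi] at this; linarith
  set f := toLong l k g with hfdef
  have hfu : f ⟨u, huN⟩ = 2 := by
    simp only [hfdef, toLong]
    rw [if_pos ⟨hpu, hgu⟩]
  have hfi : ∀ i : Fin N, (i : ℕ) ≠ u → f i = g i := by
    intro i hi
    simp only [hfdef, toLong]
    rw [if_neg]
    rintro ⟨h1, h2⟩
    exact hi (hcross i h1 h2)
  have hupd := posL_update l f g ⟨u, huN⟩ (fun i hi => hfi i (fun h => hi (Fin.ext h)))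
  have hdd : disp l (f ⟨u, huN⟩) - disp l (g ⟨u, huN⟩) = -(2 * l) := by
    rw [hfu, hgu]; simp [disp]
  have hposf' : ∀ m, m ≤ u → posL l f m = posL l g m := by
    intro m hm
    have := hupd m
    rw [hdd, if_neg (by simpa using by omega : ¬((⟨u, huN⟩ : Fin N) : ℕ) < m)] at this
    linarith
  have hposf : ∀ m, u < m → posL l f m = posL l g m - 2 * l := by
    intro m hm
    have := hupd m
    rw [hdd, if_pos (by simpa using hm : ((⟨u, huN⟩ : Fin N) : ℕ) < m)] at this
    linarith
  have hallf : allowedL l k f := by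
    intro i
    refine ⟨?_, ?_, ?_⟩
    · intro h2
      have hiu : (i : ℕ) = u := by
        by_contra hne
        exact hno2 i (by rw [← hfi i hne]; exact h2)
      rw [show posL l f (i : ℕ) = posL l f u by rw [hiu]]
      rw [hposf' u le_rfl, hpu]
    · intro hp
      by_cases hiu : u < (i : ℕ)
      · rw [hposf i hiu] at hp
        have hgp : posL l g (i : ℕ) = (l : ℤ) * ((k : ℤ) + 2) - 1 := by linarith
        have h0 := (hall i).2.2 hgp
        rw [hfi i (by omega)]
        exact h0
      · rw [hposf' i (by omega)] at hp
        by_cases hiu2 : (i : ℕ) = u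
        · exfalso
          rw [hiu2, hpu] at hp
          linarith
        · rw [hfi i hiu2]
          exact (hall i).2.1 hp
    · intro hp
      exfalso
      by_cases hiu : u < (i : ℕ)
      · rw [hposf i hiu] at hp
        have h1 := posL_le l g i
        have h2 : ((i : ℕ) : ℤ) ≤ (N : ℤ) - 1 := by have := i.isLt; omega
        linarith
      · rw [hposf' i (by omega)] at hp
        have := hbefore i (by omega)
        linarith
  refine ⟨⟨hallf, ?_⟩, ?_, ?_⟩
  · rw [hposf N huN, hposN]; ring
  · intro hcon
    exact hcon ⟨u, huN⟩ hfu
  · funext i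
    simp only [toShort]
    by_cases h2 : f i = 2
    · rw [if_pos h2]
      have hiu : (i : ℕ) = u := by
        by_contra hne
        exact hno2 i (by rw [← hfi i hne]; exact h2)
      have : i = (⟨u, huN⟩ : Fin N) := Fin.ext hiu
      rw [this, hgu]
    · rw [if_neg h2]
      have hiu : (i : ℕ) ≠ u := by
        intro h
        rw [show i = (⟨u, huN⟩ : Fin N) from Fin.ext h, hfu] at h2
        exact h2 rfl
      exact hfi i hiu
lemma Zlong_split (l k : ℕ) (M : ℤ) (N : ℕ) :
    Zlong l k M N = Zshort l k M N +
      ∑ f ∈ Finset.univ.filter (fun f : Fin N → Fin 3 =>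
        (allowedL l k f ∧ posL l f N = M) ∧ ¬(∀ i : Fin N, f i ≠ 2)), weightL l k f := by
  unfold Zlong Zshort
  rw [← Finset.sum_filter_add_sum_filter_not
      (Finset.univ.filter (fun f : Fin N → Fin 3 => allowedL l k f ∧ posL l f N = M))
      (fun f => ∀ i : Fin N, f i ≠ 2)]
  congr 1
  · rw [Finset.filter_filter]
    exact Finset.sum_congr (Finset.filter_congr (fun x _ => by tauto)) (fun _ _ => rfl)
  · rw [Finset.filter_filter]

lemma long_bound (l k : ℕ) {N : ℕ} {f : Fin N → Fin 3} (hall : allowedL l k f)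
    (i : Fin N) (hi : f i = 2) : posL l f N ≤ (N : ℤ) - 2 * l := by
  have hC := (hall i).1 hi
  have hA := pos_after_long l k hall i hi
  have h1 := posL_le l f i
  have h2 := posL_sub_le l f (show (i : ℕ) + 1 ≤ N from i.isLt)
  rw [hA] at h2
  rw [hC] at h1
  have e1 : (l : ℤ) * ((k : ℤ) + 2) = l * k + 2 * l := by ring
  push_cast at h1 h2 ⊢
  linarith

theorem stmt13' (l k : ℕ) (hl : 2 ≤ l) (hk : 1 ≤ k) (M : ℤ) (N : ℕ)
    (hM1 : (l : ℤ) * k - 1 ≤ M) (hM2 : M ≤ (l : ℤ) * (k + 2) - 2) :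
    ((N : ℤ) ≤ M + 2 * l - 2 → Zlong l k M N = Zshort l k M N) ∧
    (M + 2 * l ≤ (N : ℤ) ∧ (N : ℤ) ≤ (l : ℤ) * (k + 4) - 2 →
      Zlong l k M N = Zshort l k M N + Zshort l k (M + 2 * l) N) := by
  constructor
  · intro hN
    rw [Zlong_split l k M N]
    have hempty : Finset.univ.filter (fun f : Fin N → Fin 3 =>
        (allowedL l k f ∧ posL l f N = M) ∧ ¬(∀ i : Fin N, f i ≠ 2)) = ∅ := by
      rw [Finset.filter_eq_empty_iff]
      rintro f -
      rintro ⟨⟨hall, hpos⟩, hne⟩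
      push_neg at hne
      obtain ⟨i, hi⟩ := hne
      have := long_bound l k hall i hi
      rw [hpos] at this
      linarith
    rw [hempty]
    simp
  · rintro ⟨hN1, hN2⟩
    rw [Zlong_split l k M N]
    congr 1
    unfold Zshort
    refine Finset.sum_bij' (fun a _ => toShort a) (fun a _ => toLong l k a)
      ?_ ?_ ?_ ?_ ?_
    · intro a ha
      simp only [Finset.mem_filter, Finset.mem_univ, true_and] at ha ⊢
      obtain ⟨⟨hall, hpos⟩, hne⟩ := ha
      push_neg at hne
      obtain ⟨t, ht⟩ := hne
      exact (forward l k hl hk M hM1 hM2 hN2 hall hpos ht).1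
    · intro a ha
      simp only [Finset.mem_filter, Finset.mem_univ, true_and] at ha ⊢
      obtain ⟨hall, hno2, hpos⟩ := ha
      have h := backward l k hl hk M hM1 hN2 hall hno2 hpos
      exact ⟨h.1, h.2.1⟩
    · intro a ha
      simp only [Finset.mem_filter, Finset.mem_univ, true_and] at ha
      obtain ⟨⟨hall, hpos⟩, hne⟩ := ha
      push_neg at hne
      obtain ⟨t, ht⟩ := hne
      exact (forward l k hl hk M hM1 hM2 hN2 hall hpos ht).2.1
    · intro a ha
      simp only [Finset.mem_filter, Finset.mem_univ, true_and] at ha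
      obtain ⟨hall, hno2, hpos⟩ := ha
      exact (backward l k hl hk M hM1 hN2 hall hno2 hpos).2.2
    · intro a ha
      simp only [Finset.mem_filter, Finset.mem_univ, true_and] at ha
      obtain ⟨⟨hall, hpos⟩, hne⟩ := ha
      push_neg at hne
      obtain ⟨t, ht⟩ := hne
      exact (forward l k hl hk M hM1 hM2 hN2 hall hpos ht).2.2.symm

end Stmt13


/-- Combinatorial effect of long steps between two filters: for
`lk−1 ≤ M ≤ l(k+2)−2`, (a) `Z′(M,N) = Z(M,N)` if `N ≤ M+2l−2`, and
(b) `Z′(M,N) = Z(M,N) + Z(M+2l,N)` if `M+2l ≤ N ≤ l(k+4)−2`. -/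
theorem stmt13 (l k : ℕ) (hl : 2 ≤ l) (hk : 1 ≤ k) (M : ℤ) (N : ℕ)
    (hM1 : (l : ℤ) * k - 1 ≤ M) (hM2 : M ≤ (l : ℤ) * (k + 2) - 2) :
    ((N : ℤ) ≤ M + 2 * l - 2 → Zlong l k M N = Zshort l k M N) ∧
    (M + 2 * l ≤ (N : ℤ) ∧ (N : ℤ) ≤ (l : ℤ) * (k + 4) - 2 →
      Zlong l k M N = Zshort l k M N + Zshort l k (M + 2 * l) N) :=
  Stmt13.stmt13' l k hl hk M N hM1 hM2
end
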